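/- Fix δ > 0 and ρ ≥ 0, let (Ω, μ) be a measure space, let y₁, y₂, φ₁, φ₂, p₂ : Ω → ℝ be square-integrable functions (elements of L²(μ)), and let p₁ : Ω → ℝ be square-integrable with |p₁| ≤ ρ almost everywhere. Then ‖(β_δ' ∘ (y₂ − φ₂))·p₂ − (β_δ' ∘ (y₁ − φ₁))·p₁‖_{L²(μ)} ≤ (1/δ)·‖p₂ − p₁‖_{L²(μ)} + (2ρ/δ)·‖y₂ − y₁‖_{L²(μ)} + (2ρ/δ)·‖φ₂ − φ₁‖_{L²(μ)}. -/

import Mathlib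

open MeasureTheory

/-- The derivative `β_δ'` of the penalty function. -/
noncomputable def betaPen' (δ : ℝ) (r : ℝ) : ℝ :=
  if 0 ≤ r then 0 else if -(1/2) ≤ r then -2 * r / δ else 1 / δ

lemma betaPen'_eq (δ r : ℝ) :
    betaPen' δ r = (2 / δ) * max 0 (min (1/2) (-r)) := by
  unfold betaPen'
  split_ifs with h1 h2
  · rw [max_eq_left (by simp [min_le_iff]; right; linarith)]; ring
  · rw [min_eq_right (by linarith), max_eq_right (by linarith)]; ring
  · rw [min_eq_left (by linarith), max_eq_right (by norm_num)]; ring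

lemma clamp_lip (a b : ℝ) :
    |max 0 (min (1/2:ℝ) a) - max 0 (min (1/2:ℝ) b)| ≤ |a - b| := by
  rcases le_total a b with h | h <;>
    simp only [max_def, min_def] <;> split_ifs <;>
    rw [abs_sub_le_iff] <;> constructor <;>
    first
      | linarith [le_abs_self (a - b), neg_abs_le (a - b), abs_nonneg (a - b)]

lemma betaPen'_bd {δ : ℝ} (hδ : 0 < δ) (r : ℝ) : |betaPen' δ r| ≤ 1 / δ := by
  rw [betaPen'_eq]
  have h0 : (0:ℝ) ≤ max 0 (min (1/2) (-r)) := le_max_left _ _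
  have h1 : max 0 (min (1/2) (-r)) ≤ 1/2 := by
    apply max_le (by norm_num) (min_le_left _ _)
  rw [abs_of_nonneg (by positivity)]
  calc 2 / δ * max 0 (min (1/2) (-r)) ≤ 2 / δ * (1/2) := by gcongr
    _ = 1 / δ := by ring

lemma betaPen'_lip {δ : ℝ} (hδ : 0 < δ) (a b : ℝ) :
    |betaPen' δ a - betaPen' δ b| ≤ 2 / δ * |a - b| := by
  rw [betaPen'_eq, betaPen'_eq, ← mul_sub, abs_mul, abs_of_nonneg (by positivity)]
  have := clamp_lip (-a) (-b)
  have h2 : |-a - -b| = |a - b| := by rw [abs_sub_comm]; ring_nf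
  rw [h2] at this
  exact mul_le_mul_of_nonneg_left this (by positivity)

theorem betaPen'_mul_L2_estimate (δ : ℝ) (hδ : 0 < δ) (ρ : ℝ) (hρ : 0 ≤ ρ)
    {Ω : Type*} [MeasurableSpace Ω] (μ : Measure Ω)
    (y₁ y₂ φ₁ φ₂ p₁ p₂ : Ω → ℝ)
    (hy₁ : MemLp y₁ 2 μ) (hy₂ : MemLp y₂ 2 μ)
    (hφ₁ : MemLp φ₁ 2 μ) (hφ₂ : MemLp φ₂ 2 μ)
    (hp₁ : MemLp p₁ 2 μ) (hp₂ : MemLp p₂ 2 μ)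
    (hp₁bd : ∀ᵐ x ∂μ, |p₁ x| ≤ ρ) :
    eLpNorm ((betaPen' δ ∘ (y₂ - φ₂)) * p₂ - (betaPen' δ ∘ (y₁ - φ₁)) * p₁) 2 μ ≤
      ENNReal.ofReal (1 / δ) * eLpNorm (p₂ - p₁) 2 μ +
        ENNReal.ofReal (2 * ρ / δ) * eLpNorm (y₂ - y₁) 2 μ +
        ENNReal.ofReal (2 * ρ / δ) * eLpNorm (φ₂ - φ₁) 2 μ := by
  set g₁ : Ω → ℝ := (1/δ) • fun x => ‖(p₂ - p₁) x‖ with hg₁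
  set g₂ : Ω → ℝ := (2*ρ/δ) • fun x => ‖(y₂ - y₁) x‖ with hg₂
  set g₃ : Ω → ℝ := (2*ρ/δ) • fun x => ‖(φ₂ - φ₁) x‖ with hg₃
  have m₁ : AEStronglyMeasurable g₁ μ :=
    ((hp₂.sub hp₁).1.norm.const_smul _)
  have m₂ : AEStronglyMeasurable g₂ μ :=
    ((hy₂.sub hy₁).1.norm.const_smul _)
  have m₃ : AEStronglyMeasurable g₃ μ :=
    ((hφ₂.sub hφ₁).1.norm.const_smul _)
  have key : eLpNorm ((betaPen' δ ∘ (y₂ - φ₂)) * p₂ - (betaPen' δ ∘ (y₁ - φ₁)) * p₁) 2 μ ≤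
      eLpNorm (g₁ + g₂ + g₃) 2 μ := by
    apply eLpNorm_mono_ae
    filter_upwards [hp₁bd] with x hx
    simp only [hg₁, hg₂, hg₃, Pi.add_apply, Pi.smul_apply, Pi.sub_apply, Pi.mul_apply,
      Function.comp_apply, smul_eq_mul, Real.norm_eq_abs]
    have e1 : betaPen' δ (y₂ x - φ₂ x) * p₂ x - betaPen' δ (y₁ x - φ₁ x) * p₁ x
        = betaPen' δ (y₂ x - φ₂ x) * (p₂ x - p₁ x)
          + (betaPen' δ (y₂ x - φ₂ x) - betaPen' δ (y₁ x - φ₁ x)) * p₁ x := by ring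
    rw [e1]
    have b1 : |betaPen' δ (y₂ x - φ₂ x) * (p₂ x - p₁ x)| ≤ 1/δ * |p₂ x - p₁ x| := by
      rw [abs_mul]
      exact mul_le_mul_of_nonneg_right (betaPen'_bd hδ _) (abs_nonneg _)
    have b2 : |(betaPen' δ (y₂ x - φ₂ x) - betaPen' δ (y₁ x - φ₁ x)) * p₁ x|
        ≤ 2*ρ/δ * |y₂ x - y₁ x| + 2*ρ/δ * |φ₂ x - φ₁ x| := by
      rw [abs_mul]
      have hl := betaPen'_lip hδ (y₂ x - φ₂ x) (y₁ x - φ₁ x)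
      have h3 : |y₂ x - φ₂ x - (y₁ x - φ₁ x)| ≤ |y₂ x - y₁ x| + |φ₂ x - φ₁ x| := by
        calc |y₂ x - φ₂ x - (y₁ x - φ₁ x)| = |(y₂ x - y₁ x) - (φ₂ x - φ₁ x)| := by ring_nf
        _ ≤ _ := abs_sub _ _
      calc |betaPen' δ (y₂ x - φ₂ x) - betaPen' δ (y₁ x - φ₁ x)| * |p₁ x|
          ≤ (2/δ * (|y₂ x - y₁ x| + |φ₂ x - φ₁ x|)) * ρ := by
            apply mul_le_mul (hl.trans ?_) hx (abs_nonneg _) (by positivity)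
            exact mul_le_mul_of_nonneg_left h3 (by positivity)
        _ = 2*ρ/δ * |y₂ x - y₁ x| + 2*ρ/δ * |φ₂ x - φ₁ x| := by ring
    have rhs_nonneg : (0:ℝ) ≤ 1/δ * |p₂ x - p₁ x| + 2*ρ/δ * |y₂ x - y₁ x|
        + 2*ρ/δ * |φ₂ x - φ₁ x| := by positivity
    rw [abs_of_nonneg rhs_nonneg]
    exact (abs_add_le _ _).trans (by linarith [b1, b2])
  refine key.trans ?_
  have t1 : eLpNorm (g₁ + g₂ + g₃) 2 μ ≤ eLpNorm g₁ 2 μ + eLpNorm g₂ 2 μ + eLpNorm g₃ 2 μ := by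
    calc eLpNorm (g₁ + g₂ + g₃) 2 μ ≤ eLpNorm (g₁ + g₂) 2 μ + eLpNorm g₃ 2 μ :=
          eLpNorm_add_le (m₁.add m₂) m₃ one_le_two
      _ ≤ eLpNorm g₁ 2 μ + eLpNorm g₂ 2 μ + eLpNorm g₃ 2 μ := by
          gcongr; exact eLpNorm_add_le m₁ m₂ one_le_two
  refine t1.trans ?_
  have e₁ : eLpNorm g₁ 2 μ = ENNReal.ofReal (1/δ) * eLpNorm (p₂ - p₁) 2 μ := by
    rw [hg₁, eLpNorm_const_smul, eLpNorm_norm, Real.enorm_eq_ofReal (by positivity)]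
  have e₂ : eLpNorm g₂ 2 μ = ENNReal.ofReal (2*ρ/δ) * eLpNorm (y₂ - y₁) 2 μ := by
    rw [hg₂, eLpNorm_const_smul, eLpNorm_norm, Real.enorm_eq_ofReal (by positivity)]
  have e₃ : eLpNorm g₃ 2 μ = ENNReal.ofReal (2*ρ/δ) * eLpNorm (φ₂ - φ₁) 2 μ := by
    rw [hg₃, eLpNorm_const_smul, eLpNorm_norm, Real.enorm_eq_ofReal (by positivity)]
  rw [e₁, e₂, e₃]
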